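/- Let i,j ≥ 2 and let p₁,...,p_i, q₁,...,q_j be distinct elements of [n]. In the ring M_n, the expansion h({p₁,...,p_i})·h({q₁,...,q_j}) − h({p₁,...,p_{i−1}})·h({q₁,...,q_j,p_i}) − h({p₁,...,p_i,q_j})·h({q₁,...,q_{j−1}}) + h({p₁,...,p_{i−1},q_j})·h({q₁,...,q_{j−1},p_i}) + h({p₁,...,p_{i−1},q₁,...,q_{j−1}})·h({p_i,q_j}) equals zero. -/
import Mathlib


open MvPolynomial

/-- The defining relations of the ring `M_n`: diagonal generators vanish, `x_{a,b}² = 0`,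
`x_{a,b}·x_{a,c} = 0` for distinct `a,b,c`, and the Ptolemy relations
`x_{a,b}x_{c,d} + x_{a,c}x_{b,d} + x_{a,d}x_{b,c} = 0` for distinct `a,b,c,d`. -/
def relSet (n : ℕ) : Set (MvPolynomial (Sym2 (Fin n)) ℚ) :=
  {p | (∃ a : Fin n, p = X s(a, a)) ∨
       (∃ a b : Fin n, a ≠ b ∧ p = X s(a, b) * X s(a, b)) ∨
       (∃ a b c : Fin n, a ≠ b ∧ a ≠ c ∧ b ≠ c ∧ p = X s(a, b) * X s(a, c)) ∨
       (∃ a b c d : Fin n, a ≠ b ∧ a ≠ c ∧ a ≠ d ∧ b ≠ c ∧ b ≠ d ∧ c ≠ d ∧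
         p = X s(a, b) * X s(c, d) + X s(a, c) * X s(b, d) + X s(a, d) * X s(b, c))}

/-- The ring `M_n`, presented by generators `x_{a,b}` for two-element subsets `{a,b}` of `[n]`
subject to the relations in `relSet`. -/
abbrev Mring (n : ℕ) := MvPolynomial (Sym2 (Fin n)) ℚ ⧸ Ideal.span (relSet n)

/-- The generator `x_{a,b}` of `M_n`. -/
noncomputable def xg {n : ℕ} (a b : Fin n) : Mring n :=
  Ideal.Quotient.mk _ (X s(a, b))

/-- `h(A) = Σ_{{a,b} ⊆ A} x_{a,b}`, the sum over two-element subsets of `A`. -/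
noncomputable def hA {n : ℕ} (A : Finset (Fin n)) : Mring n :=
  ∑ a ∈ A, ∑ b ∈ A.filter (fun b => a < b), xg a b

lemma xg_symm {n : ℕ} (a b : Fin n) : xg a b = xg b a := by
  unfold xg; rw [Sym2.eq_swap]

lemma ptolemy {n : ℕ} {a b c d : Fin n} (hab : a ≠ b) (hac : a ≠ c) (had : a ≠ d)
    (hbc : b ≠ c) (hbd : b ≠ d) (hcd : c ≠ d) :
    xg a b * xg c d + xg a c * xg b d + xg a d * xg b c = 0 := by
  unfold xg
  rw [← map_mul, ← map_mul, ← map_mul, ← map_add, ← map_add,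
    Ideal.Quotient.eq_zero_iff_mem]
  exact Ideal.subset_span (Or.inr (Or.inr (Or.inr
    ⟨a, b, c, d, hab, hac, had, hbc, hbd, hcd, rfl⟩)))

lemma hA_insert {n : ℕ} {S : Finset (Fin n)} {c : Fin n} (hc : c ∉ S) :
    hA (insert c S) = hA S + ∑ p ∈ S, xg p c := by
  unfold hA
  rw [Finset.sum_insert hc]
  have h1 : (insert c S).filter (fun b => c < b) = S.filter (fun b => c < b) := by
    rw [Finset.filter_insert, if_neg (lt_irrefl c)]
  have h2 : ∀ x ∈ S, (∑ b ∈ (insert c S).filter (fun b => x < b), xg x b)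
      = (∑ b ∈ S.filter (fun b => x < b), xg x b) + if x < c then xg x c else 0 := by
    intro x hx
    rw [Finset.filter_insert]
    split_ifs with h
    · rw [Finset.sum_insert (by simp [Finset.mem_filter, hc])]; ring
    · ring
  rw [h1, Finset.sum_congr rfl h2, Finset.sum_add_distrib, ← Finset.sum_filter]
  have h3 : (∑ b ∈ S.filter (fun b => c < b), xg c b)
      = ∑ b ∈ S.filter (fun b => c < b), xg b c :=
    Finset.sum_congr rfl fun b _ => xg_symm c b
  have h4 : S.filter (fun b => c < b) = S.filter (fun x => ¬ x < c) := by
    apply Finset.filter_congr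
    intro x hx
    have hxc : x ≠ c := fun h => hc (h ▸ hx)
    exact ⟨fun h => not_lt.2 (le_of_lt h),
      fun h => lt_of_le_of_ne (not_lt.1 h) (Ne.symm hxc)⟩
  rw [h3, h4]
  rw [add_comm (∑ b ∈ S.filter (fun x => ¬ x < c), xg b c), add_assoc,
    Finset.sum_filter_add_sum_filter_not]

lemma hA_union {n : ℕ} {S T : Finset (Fin n)} (hST : Disjoint S T) :
    hA (S ∪ T) = hA S + hA T + ∑ p ∈ S, ∑ q ∈ T, xg p q := by
  induction T using Finset.induction with
  | empty => simp [hA]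
  | @insert c T hc ih =>
    have hdisj : Disjoint S T := hST.mono_right (Finset.subset_insert c T)
    have hcS : c ∉ S := fun h =>
      (Finset.disjoint_left.1 hST h) (Finset.mem_insert_self c T)
    have hcST : c ∉ S ∪ T := by simp [hcS, hc]
    rw [Finset.union_insert, hA_insert hcST, ih hdisj, hA_insert hc, Finset.sum_union hdisj]
    have : ∀ p ∈ S, (∑ q ∈ insert c T, xg p q) = (∑ q ∈ T, xg p q) + xg p c := by
      intro p hp; rw [Finset.sum_insert hc]; ring
    rw [Finset.sum_congr rfl this, Finset.sum_add_distrib]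
    ring

/-- The five-term identity of Lemma 3.7: with `A = {p₁,…,p_i}`, `B = {q₁,…,q_j}` disjoint
subsets of `[n]` of sizes `i, j ≥ 2`, and `a = p_i ∈ A`, `b = q_j ∈ B`, one has
`h(A)h(B) − h(A∖{a})h(B∪{a}) − h(A∪{b})h(B∖{b}) + h((A∖{a})∪{b})h((B∖{b})∪{a})
  + h((A∖{a})∪(B∖{b}))h({a,b}) = 0` in `M_n`. -/
theorem five_term_skein (n : ℕ) (A B : Finset (Fin n)) (hAB : Disjoint A B)
    (hA2 : 2 ≤ A.card) (hB2 : 2 ≤ B.card) (a : Fin n) (b : Fin n)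
    (ha : a ∈ A) (hb : b ∈ B) :
    hA A * hA B - hA (A.erase a) * hA (insert a B) - hA (insert b A) * hA (B.erase b)
      + hA (insert b (A.erase a)) * hA (insert a (B.erase b))
      + hA ((A.erase a) ∪ (B.erase b)) * hA ({a, b} : Finset (Fin n)) = 0 := by
  set A' := A.erase a with hA'def
  set B' := B.erase b with hB'def
  have hab : a ≠ b := fun h => (Finset.disjoint_left.1 hAB ha) (h ▸ hb)
  have haA' : a ∉ A' := Finset.notMem_erase a A
  have hbB' : b ∉ B' := Finset.notMem_erase b B
  have hbA' : b ∉ A' := fun h =>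
    (Finset.disjoint_left.1 hAB (Finset.mem_of_mem_erase h)) hb
  have haB' : a ∉ B' := fun h =>
    Finset.disjoint_right.1 hAB (Finset.mem_of_mem_erase h) ha
  have hbA : b ∉ A := fun h => (Finset.disjoint_left.1 hAB h) hb
  have haB : a ∉ B := fun h => Finset.disjoint_right.1 hAB h ha
  have hdisj : Disjoint A' B' :=
    (hAB.mono (Finset.erase_subset a A) (Finset.erase_subset b B))
  have eA : hA A = hA A' + ∑ p ∈ A', xg p a := by
    conv_lhs => rw [← Finset.insert_erase ha]
    rw [hA_insert haA']
  have eB : hA B = hA B' + ∑ q ∈ B', xg q b := by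
    conv_lhs => rw [← Finset.insert_erase hb]
    rw [hA_insert hbB']
  have eaB : hA (insert a B) = (hA B' + ∑ q ∈ B', xg q b) + (xg a b + ∑ q ∈ B', xg q a) := by
    rw [hA_insert haB, eB]
    have h5 : (∑ q ∈ B, xg q a) = xg b a + ∑ q ∈ B', xg q a := by
      conv_lhs => rw [← Finset.insert_erase hb]
      rw [Finset.sum_insert hbB']
    rw [h5, xg_symm b a]
  have ebA : hA (insert b A) = (hA A' + ∑ p ∈ A', xg p a) + (xg a b + ∑ p ∈ A', xg p b) := by
    rw [hA_insert hbA, eA]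
    have h5 : (∑ p ∈ A, xg p b) = xg a b + ∑ p ∈ A', xg p b := by
      conv_lhs => rw [← Finset.insert_erase ha]
      rw [Finset.sum_insert haA']
    rw [h5]
  have ebA' : hA (insert b A') = hA A' + ∑ p ∈ A', xg p b := hA_insert hbA'
  have eaB' : hA (insert a B') = hA B' + ∑ q ∈ B', xg q a := hA_insert haB'
  have eU : hA (A' ∪ B') = hA A' + hA B' + ∑ p ∈ A', ∑ q ∈ B', xg p q := hA_union hdisj
  have epair : hA ({a, b} : Finset (Fin n)) = xg a b := by
    have h0 : hA ({b} : Finset (Fin n)) = 0 := by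
      simp [hA, Finset.filter_singleton, lt_irrefl]
    rw [show ({a, b} : Finset (Fin n)) = insert a {b} from rfl,
      hA_insert (by simp [hab]), h0, Finset.sum_singleton, xg_symm b a, zero_add]
  have key : (∑ p ∈ A', xg p a) * (∑ q ∈ B', xg q b)
      + (∑ p ∈ A', xg p b) * (∑ q ∈ B', xg q a)
      + (∑ p ∈ A', ∑ q ∈ B', xg p q) * xg a b = 0 := by
    rw [Finset.sum_mul_sum, Finset.sum_mul_sum, Finset.sum_mul]
    have : ∀ p ∈ A', (∑ q ∈ B', xg p q) * xg a b = ∑ q ∈ B', xg p q * xg a b := by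
      intro p _; rw [Finset.sum_mul]
    rw [Finset.sum_congr rfl this, ← Finset.sum_add_distrib, ← Finset.sum_add_distrib]
    apply Finset.sum_eq_zero
    intro p hp
    rw [← Finset.sum_add_distrib, ← Finset.sum_add_distrib]
    apply Finset.sum_eq_zero
    intro q hq
    have hpa : p ≠ a := Finset.ne_of_mem_erase hp
    have hqb : q ≠ b := Finset.ne_of_mem_erase hq
    have hpq : p ≠ q := fun h =>
      (Finset.disjoint_left.1 hdisj hp) (h ▸ hq)
    have hpb : p ≠ b := fun h => hbA' (h ▸ hp)
    have hqa : q ≠ a := fun h => haB' (h ▸ hq)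
    have := ptolemy hpa hpq hpb (Ne.symm hqa) hab hqb
    -- ptolemy p a q b : xg p a * xg q b + xg p q * xg a b + xg p b * xg a q = 0
    rw [xg_symm a q] at this
    linear_combination this
  rw [eA, eB, eaB, ebA, ebA', eaB', eU, epair]
  linear_combination key
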